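/- Let p be an odd prime, η a nontrivial multiplicative character of F_p extended by η(0)=0, S an invertible symmetric r×r matrix over F_p with r even, and c ∈ F_p. Then Σ_{w ∈ F_p^r} η(w S wᵀ + c) = p^{r/2} · φ((-1)^{r/2} det S) · η(c), where φ is the quadratic character of F_p. -/

import Mathlib

open Matrix

/-- The quadratic character of `ZMod p` with values in `ℂ`. -/
noncomputable def quadCharC (p : ℕ) [Fact p.Prime] : MulChar (ZMod p) ℂ :=
  (quadraticChar (ZMod p)).ringHomComp (Int.castRingHom ℂ)

/-! Diagonalising `S` by a congruence `Pᵀ S P = diagonal d` changes `det S` only by the square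
`(det P)²`. For a diagonal form, expand `η` in additive characters,
`η(y) G(η⁻¹, ψ) = ∑_b η⁻¹(b) ψ(b y)`. The inner sums `∑_x ψ(b ∑ dᵢ xᵢ²)` factor into
one-variable quadratic Gauss sums `φ(b dᵢ) G(φ, ψ)`; for even rank the factors `φ(b)` cancel,
so the inner sum is `φ(∏ dᵢ) G(φ, ψ)^r` for every `b ≠ 0`, and `G(φ, ψ)² = φ(-1) p`. -/

section Diagonalization

variable {K ι : Type*} [Field K] [Fintype ι] [DecidableEq ι]

theorem Matrix.IsSymm.exists_transpose_mul_mul_eq_diagonal [Invertible (2 : K)]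
    {S : Matrix ι ι K} (hS : S.IsSymm) :
    ∃ (P : Matrix ι ι K) (d : ι → K), IsUnit P ∧ Pᵀ * S * P = diagonal d := by
  set B := toBilin' S
  have hB : LinearMap.IsSymm B := by
    rw [LinearMap.isSymm_def]
    intro x y
    rw [RingHom.id_apply, toBilin'_apply', toBilin'_apply', dotProduct_mulVec,
      ← mulVec_transpose, hS.eq, dotProduct_comm]
  obtain ⟨v, hv⟩ := LinearMap.BilinForm.exists_orthogonal_basis hB
  let e : Fin (Module.finrank K (ι → K)) ≃ ι :=
    Fintype.equivOfCardEq (by rw [Fintype.card_fin, Module.finrank_fintype_fun_eq_card])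
  let b := Pi.basisFun K ι
  let P := b.toMatrix (v.reindex e)
  have : Invertible P := b.invertibleToMatrix _
  refine ⟨P, fun i => B (v (e.symm i)) (v (e.symm i)), isUnit_of_invertible P, ?_⟩
  have hSb : LinearMap.BilinForm.toMatrix b B = S := by
    rw [LinearMap.BilinForm.toMatrix_basisFun, LinearMap.BilinForm.toMatrix'_toBilin']
  rw [← hSb, LinearMap.BilinForm.toMatrix_mul_basis_toMatrix]
  ext i j
  rw [LinearMap.BilinForm.toMatrix_apply]
  simp only [Module.Basis.coe_reindex, Function.comp_apply]
  rcases eq_or_ne i j with rfl | hij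
  · rw [diagonal_apply_eq]
  · rw [diagonal_apply_ne _ hij]
    exact hv (e.symm.injective.ne hij)

end Diagonalization

section QuadraticForm

variable {R ι : Type*} [CommRing R] [Fintype ι]

theorem Matrix.mulVec_dotProduct_mulVec_mulVec (P S : Matrix ι ι R) (x : ι → R) :
    P *ᵥ x ⬝ᵥ S *ᵥ (P *ᵥ x) = x ⬝ᵥ (Pᵀ * S * P) *ᵥ x := by
  rw [mulVec_mulVec, dotProduct_mulVec, ← vecMul_transpose, vecMul_vecMul, ← dotProduct_mulVec,
    Matrix.mul_assoc]

theorem Matrix.dotProduct_diagonal_mulVec [DecidableEq ι] (d x : ι → R) :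
    x ⬝ᵥ diagonal d *ᵥ x = ∑ i, d i * x i ^ 2 := by
  simp only [mulVec_diagonal, dotProduct]
  exact Finset.sum_congr rfl fun i _ => by ring

end QuadraticForm

section Characters

variable {F : Type*} [Field F] [Fintype F]

theorem AddChar.map_sum_eq_prod {A M ι : Type*} [AddCommMonoid A] [CommMonoid M]
    (ψ : AddChar A M) (s : Finset ι) (f : ι → A) : ψ (∑ i ∈ s, f i) = ∏ i ∈ s, ψ (f i) := by
  classical
  induction s using Finset.induction_on with
  | empty => simp
  | insert _ _ h ih => rw [Finset.sum_insert h, Finset.prod_insert h, map_add_eq_mul, ih]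

theorem sum_mulChar_mul_addChar_mul {R : Type*} [CommRing R] [IsDomain R] {χ : MulChar F R}
    (hχ : χ ≠ 1) (ψ : AddChar F R) (y : F) :
    ∑ b, χ b * ψ (b * y) = χ⁻¹ y * gaussSum χ ψ := by
  rcases eq_or_ne y 0 with rfl | hy
  · simp only [mul_zero, AddChar.map_zero_eq_one, mul_one, MulChar.sum_eq_zero_of_ne_one hχ,
      MulChar.map_zero, zero_mul]
  · lift y to Fˣ using hy.isUnit
    rw [← gaussSum_mulShift_eq]
    simp only [gaussSum, AddChar.mulShift_apply, mul_comm (y : F)]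

theorem sum_mulChar_add_eq_of_sum_addChar_mul_eq {V : Type*} [Fintype V] {η : MulChar F ℂ}
    (hη : η ≠ 1) {ψ : AddChar F ℂ} (hψ : ψ.IsPrimitive) (Q : V → F) (K : ℂ)
    (hK : ∀ b ≠ 0, ∑ x, ψ (b * Q x) = K) (c : F) :
    ∑ x, η (Q x + c) = K * η c := by
  set g := gaussSum η⁻¹ ψ
  have hg : g ≠ 0 := gaussSum_ne_zero_of_nontrivial (Nat.cast_ne_zero.mpr Fintype.card_ne_zero)
    (inv_ne_one.mpr hη) hψ
  have fourier (y : F) : η y * g = ∑ b, η⁻¹ b * ψ (b * y) := by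
    rw [sum_mulChar_mul_addChar_mul (inv_ne_one.mpr hη), inv_inv]
  apply mul_right_cancel₀ hg
  calc (∑ x, η (Q x + c)) * g
      = ∑ b, η⁻¹ b * ψ (b * c) * ∑ x, ψ (b * Q x) := by
        simp_rw [Finset.sum_mul, fourier, Finset.mul_sum]
        rw [Finset.sum_comm]
        simp_rw [mul_add, AddChar.map_add_eq_mul]
        exact Finset.sum_congr rfl fun b _ => Finset.sum_congr rfl fun x _ => by ring
    _ = ∑ b, η⁻¹ b * ψ (b * c) * K := by
        refine Finset.sum_congr rfl fun b _ => ?_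
        rcases eq_or_ne b 0 with rfl | hb
        · simp only [MulChar.map_zero, zero_mul]
        · rw [hK b hb]
    _ = K * η c * g := by
        rw [← Finset.sum_mul, ← fourier]
        ring

variable [DecidableEq F]

theorem sum_comp_sq_eq_sum_one_add_quadraticChar_smul {M : Type*} [AddCommGroup M]
    (hF : ringChar F ≠ 2) (f : F → M) :
    ∑ x, f (x ^ 2) = ∑ t, (1 + quadraticChar F t) • f t := by
  rw [← Fintype.sum_fiberwise (fun x : F => x ^ 2) (fun x => f (x ^ 2))]
  refine Finset.sum_congr rfl fun t _ => ?_
  rw [Finset.sum_congr rfl fun x _ => congrArg f x.2, Finset.sum_const, Finset.card_univ,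
    add_comm, ← quadraticChar_card_sqrts hF t, Set.toFinset_card, natCast_zsmul]
  rfl

-- For `F = ZMod p` this is `quadCharC p`.
variable (F) in
noncomputable def quadraticCharComplex : MulChar F ℂ :=
  (quadraticChar F).ringHomComp (Int.castRingHom ℂ)

local notation "φ" => quadraticCharComplex F

theorem quadraticCharComplex_apply (a : F) : φ a = quadraticChar F a := rfl

theorem quadraticCharComplex_ne_one (hF : ringChar F ≠ 2) : φ ≠ 1 :=
  (MulChar.ringHomComp_ne_one_iff (RingHom.injective_int _)).mpr (quadraticChar_ne_one hF)

theorem isQuadratic_quadraticCharComplex : (φ).IsQuadratic :=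
  (quadraticChar_isQuadratic F).comp _

theorem quadraticCharComplex_sq {a : F} (ha : a ≠ 0) : φ (a ^ 2) = 1 := by
  rw [quadraticCharComplex_apply, quadraticChar_sq_one' ha, Int.cast_one]

theorem sum_addChar_mul_sq (hF : ringChar F ≠ 2) {ψ : AddChar F ℂ} (hψ : ψ.IsPrimitive)
    {a : F} (ha : a ≠ 0) : ∑ x, ψ (a * x ^ 2) = φ a * gaussSum φ ψ := by
  have hsum : ∑ t, ψ (a * t) = 0 := AddChar.sum_eq_zero_of_ne_one (hψ ha)
  calc ∑ x, ψ (a * x ^ 2)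
      = ∑ t, ψ (a * t) + ∑ t, φ t * ψ (a * t) := by
        rw [sum_comp_sq_eq_sum_one_add_quadraticChar_smul hF (fun t => ψ (a * t)),
          ← Finset.sum_add_distrib]
        simp only [zsmul_eq_mul, Int.cast_add, Int.cast_one, add_mul, one_mul,
          quadraticCharComplex_apply]
    _ = gaussSum φ (ψ.mulShift (ha.isUnit.unit : F)) := by
        rw [hsum, zero_add]
        rfl
    _ = φ a * gaussSum φ ψ := by
        rw [gaussSum_mulShift_eq, isQuadratic_quadraticCharComplex.inv, IsUnit.unit_spec]

theorem sum_addChar_sum_mul_sq {ι : Type*} [Fintype ι] [DecidableEq ι] (hF : ringChar F ≠ 2)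
    {ψ : AddChar F ℂ} (hψ : ψ.IsPrimitive) {a : ι → F} (ha : ∀ i, a i ≠ 0) :
    ∑ x : ι → F, ψ (∑ i, a i * x i ^ 2) = φ (∏ i, a i) * gaussSum φ ψ ^ Fintype.card ι := by
  simp_rw [AddChar.map_sum_eq_prod]
  rw [← Fintype.prod_sum fun i t => ψ (a i * t ^ 2)]
  simp_rw [sum_addChar_mul_sq hF hψ (ha _)]
  rw [Finset.prod_mul_distrib, map_prod, Finset.prod_const, Finset.card_univ]

theorem sum_mulChar_sum_mul_sq_add {ι : Type*} [Fintype ι] [DecidableEq ι] (hF : ringChar F ≠ 2)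
    {η : MulChar F ℂ} (hη : η ≠ 1) (hι : Even (Fintype.card ι)) {d : ι → F}
    (hd : ∀ i, d i ≠ 0) (c : F) :
    ∑ x : ι → F, η (∑ i, d i * x i ^ 2 + c) =
      (Fintype.card F : ℂ) ^ (Fintype.card ι / 2) *
        φ ((-1) ^ (Fintype.card ι / 2) * ∏ i, d i) * η c := by
  obtain ⟨m, hm⟩ := hι
  let ψ := AddChar.FiniteField.primitiveChar_to_Complex F
  have hψ : ψ.IsPrimitive := AddChar.FiniteField.primitiveChar_to_Complex_isPrimitive F
  rw [sum_mulChar_add_eq_of_sum_addChar_mul_eq hη hψ _ (φ (∏ i, d i) * gaussSum φ ψ ^ (m + m))]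
  · rw [hm, ← two_mul, Nat.mul_div_cancel_left m two_pos, pow_mul,
      gaussSum_sq (quadraticCharComplex_ne_one hF) isQuadratic_quadraticCharComplex hψ,
      map_mul, map_pow]
    ring
  · intro b hb
    simp_rw [Finset.mul_sum, ← mul_assoc]
    rw [sum_addChar_sum_mul_sq hF hψ fun i => mul_ne_zero hb (hd i), Finset.prod_mul_distrib,
      Finset.prod_const, Finset.card_univ, hm, map_mul, ← two_mul, pow_mul, map_pow,
      quadraticCharComplex_sq hb, one_pow, one_mul]

theorem sum_mulChar_dotProduct_mulVec_add {ι : Type*} [Fintype ι] [DecidableEq ι]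
    (hF : ringChar F ≠ 2) {η : MulChar F ℂ} (hη : η ≠ 1) (hι : Even (Fintype.card ι))
    {S : Matrix ι ι F} (hS : S.IsSymm) (hS₀ : IsUnit S.det) (c : F) :
    ∑ w, η (w ⬝ᵥ S *ᵥ w + c) =
      (Fintype.card F : ℂ) ^ (Fintype.card ι / 2) *
        φ ((-1) ^ (Fintype.card ι / 2) * S.det) * η c := by
  have : Invertible (2 : F) := invertibleOfNonzero (Ring.two_ne_zero hF)
  obtain ⟨P, d, hP, hPSP⟩ := hS.exists_transpose_mul_mul_eq_diagonal
  have hPdet : IsUnit P.det := (isUnit_iff_isUnit_det P).mp hP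
  have hdet : ∏ i, d i = P.det ^ 2 * S.det := by
    rw [← det_diagonal, ← hPSP, det_mul, det_mul, det_transpose]
    ring
  have hd (i : ι) : d i ≠ 0 :=
    Finset.prod_ne_zero_iff.mp (hdet ▸ mul_ne_zero (pow_ne_zero 2 hPdet.ne_zero) hS₀.ne_zero) i
      (Finset.mem_univ i)
  have hbij : Function.Bijective P.mulVec :=
    Finite.injective_iff_bijective.mp (mulVec_injective_iff_isUnit.mpr hP)
  rw [← Fintype.sum_bijective _ hbij (fun x => η (P *ᵥ x ⬝ᵥ S *ᵥ (P *ᵥ x) + c)) _ fun _ => rfl]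
  simp_rw [mulVec_dotProduct_mulVec_mulVec, hPSP, dotProduct_diagonal_mulVec]
  rw [sum_mulChar_sum_mul_sq_add hF hη hι hd c, hdet, mul_left_comm, map_mul,
    quadraticCharComplex_sq hPdet.ne_zero, one_mul]

end Characters

theorem charSum_quadForm_even_rank_general (p r : ℕ) [Fact p.Prime] (hp : p ≠ 2)
    (η : MulChar (ZMod p) ℂ) (hη : η ≠ 1) (hr : Even r)
    (S : Matrix (Fin r) (Fin r) (ZMod p)) (hS : Sᵀ = S) (hSdet : IsUnit S.det)
    (c : ZMod p) :
    (∑ w : Fin r → ZMod p, η (dotProduct w (S.mulVec w) + c)) =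
      (p : ℂ) ^ (r / 2) * quadCharC p ((-1 : ZMod p) ^ (r / 2) * S.det) * η c := by
  have hF : ringChar (ZMod p) ≠ 2 := by rwa [ZMod.ringChar_zmod_n]
  have h := sum_mulChar_dotProduct_mulVec_add hF hη (by rwa [Fintype.card_fin]) hS hSdet c
  rwa [ZMod.card, Fintype.card_fin] at h

/-- Lemma 5.3, even-rank case: for `p` an odd prime, `η` a nontrivial multiplicative
character of `F_p`, `S` an invertible symmetric `r × r` matrix with `r` even, and
`c ∈ F_p`, `∑_{w ∈ F_p^r} η(w S wᵀ + c) = p^(r/2) φ((-1)^(r/2) det S) η(c)`. -/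
theorem charSum_quadForm_even_rank (p r : ℕ) [Fact p.Prime] (hp : p ≠ 2)
    (η : MulChar (ZMod p) ℂ) (hη : η ≠ 1) (hr : Even r) (hr0 : 0 < r)
    (S : Matrix (Fin r) (Fin r) (ZMod p)) (hS : Sᵀ = S) (hSdet : IsUnit S.det)
    (c : ZMod p) :
    (∑ w : Fin r → ZMod p, η (dotProduct w (S.mulVec w) + c)) =
      (p : ℂ) ^ (r / 2) * quadCharC p ((-1 : ZMod p) ^ (r / 2) * S.det) * η c :=
  charSum_quadForm_even_rank_general p r hp η hη hr S hS hSdet c
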